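/- For any graph G and any integer n ≥ 1, γ_r(G∘K_n) = γ_r(G), where K_n is the complete graph on n vertices. -/

import Mathlib

open Finset
open scoped Classical

/-- The lexicographic product of two simple graphs. -/
def lexProd {α β : Type*} (G : SimpleGraph α) (H : SimpleGraph β) :
    SimpleGraph (α × β) where
  Adj p q := G.Adj p.1 q.1 ∨ (p.1 = q.1 ∧ H.Adj p.2 q.2)
  symm := by
    constructor
    rintro ⟨a, b⟩ ⟨c, d⟩ (h | ⟨h1, h2⟩)
    · exact Or.inl h.symm
    · exact Or.inr ⟨h1.symm, h2.symm⟩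
  loopless := by
    constructor
    rintro ⟨a, b⟩ (h | ⟨h1, h2⟩)
    · exact G.irrefl h
    · exact H.irrefl h2

/-- A vertex `w` is undefended with respect to `g` if `g w = 0` and `g x = 0`
for every neighbour `x` of `w`. -/
def Undefended {α : Type*} (G : SimpleGraph α) (g : α → ℕ) (w : α) : Prop :=
  g w = 0 ∧ ∀ x, G.Adj w x → g x = 0

/-- A weak Roman dominating function. -/
def IsWRDF {α : Type*} (G : SimpleGraph α) (f : α → ℕ) : Prop :=
  (∀ v, f v ≤ 2) ∧
    ∀ v, f v = 0 → ∃ u, G.Adj u v ∧ 1 ≤ f u ∧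
      ∀ w, ¬ Undefended G (Function.update (Function.update f v 1) u (f u - 1)) w

/-- The weak Roman domination number. -/
noncomputable def weakRomanNumber {α : Type*} (G : SimpleGraph α) [Fintype α] : ℕ :=
  sInf {k | ∃ f : α → ℕ, IsWRDF G f ∧ ∑ v, f v = k}

/-- A dominating set. -/
def IsDomSet {α : Type*} (G : SimpleGraph α) (D : Finset α) : Prop :=
  ∀ v ∉ D, ∃ u ∈ D, G.Adj u v

/-- The domination number. -/
noncomputable def domNumber {α : Type*} (G : SimpleGraph α) [Fintype α] : ℕ :=
  sInf {k | ∃ D : Finset α, IsDomSet G D ∧ D.card = k}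

/-- A total dominating set. -/
def IsTotalDomSet {α : Type*} (G : SimpleGraph α) (S : Finset α) : Prop :=
  ∀ v, ∃ u ∈ S, G.Adj u v

/-- The total domination number. -/
noncomputable def totalDomNumber {α : Type*} (G : SimpleGraph α) [Fintype α] : ℕ :=
  sInf {k | ∃ S : Finset α, IsTotalDomSet G S ∧ S.card = k}

/-- A double total dominating set: every vertex has at least two neighbours in `S`. -/
def IsDoubleTotalDomSet {α : Type*} (G : SimpleGraph α) (S : Finset α) : Prop :=
  ∀ v, ∃ u₁ ∈ S, ∃ u₂ ∈ S, u₁ ≠ u₂ ∧ G.Adj u₁ v ∧ G.Adj u₂ v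

/-- The double total domination number. -/
noncomputable def doubleTotalDomNumber {α : Type*} (G : SimpleGraph α) [Fintype α] : ℕ :=
  sInf {k | ∃ S : Finset α, IsDoubleTotalDomSet G S ∧ S.card = k}

/-- A 2-packing: the closed neighbourhoods of distinct members are disjoint. -/
def IsTwoPacking {α : Type*} (G : SimpleGraph α) (X : Finset α) : Prop :=
  ∀ u ∈ X, ∀ v ∈ X, u ≠ v →
    ∀ w, ¬ ((w = u ∨ G.Adj u w) ∧ (w = v ∨ G.Adj v w))

/-- The 2-packing number. -/
noncomputable def twoPackingNumber {α : Type*} (G : SimpleGraph α) [Fintype α] : ℕ :=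
  sSup {k | ∃ X : Finset α, IsTwoPacking G X ∧ X.card = k}

/-- A secure dominating set. -/
def IsSecureDomSet {α : Type*} (G : SimpleGraph α) (S : Finset α) : Prop :=
  IsDomSet G S ∧ ∀ v ∉ S, ∃ u ∈ S, G.Adj u v ∧ IsDomSet G (insert v (S.erase u))

/-- The secure domination number. -/
noncomputable def secureDomNumber {α : Type*} (G : SimpleGraph α) [Fintype α] : ℕ :=
  sInf {k | ∃ S : Finset α, IsSecureDomSet G S ∧ S.card = k}

/-- The corona product of two graphs. -/
def corona {α β : Type*} (G₁ : SimpleGraph α) (G₂ : SimpleGraph β) :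
    SimpleGraph (α ⊕ α × β) where
  Adj x y :=
    match x, y with
    | .inl a, .inl a' => G₁.Adj a a'
    | .inl a, .inr p => a = p.1
    | .inr p, .inl a => p.1 = a
    | .inr p, .inr q => p.1 = q.1 ∧ G₂.Adj p.2 q.2
  symm := by
    constructor
    rintro (a | p) (a' | q) h
    · exact G₁.adj_symm h
    · exact h.symm
    · exact h.symm
    · exact ⟨h.1.symm, G₂.adj_symm h.2⟩
  loopless := by
    constructor
    rintro (a | p) h
    · exact G₁.irrefl h
    · exact G₂.irrefl h.2

/-! A weak Roman dominating function `f` on `G`, placed on a single layer `α × {z}`, is one on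
`G ∘ K_n`: a vertex `(u, b)` off that layer is defended by `(u, z)` when `f u ≥ 1`, and by the
copy of its defender in `G` otherwise. Conversely, capping the fibre sums `∑ y, F (x, y)` at `2`
turns a weak Roman dominating function on `G ∘ K_n` into one on `G` of no larger weight. In both
directions the closed neighbourhood of `(a, b)` in `G ∘ K_n` consists of whole fibres over the
closed neighbourhood of `a`, so undefended vertices transfer between the two graphs once the
supports of the two functions project onto each other. -/

section

variable {α β : Type*}

lemma Undefended.of_lexProd_top {G : SimpleGraph α} {F : α × β → ℕ} {g : α → ℕ}
    (hg : ∀ x, g x ≠ 0 → ∃ y, F (x, y) ≠ 0) {p : α × β}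
    (h : Undefended (lexProd G ⊤) F p) : Undefended G g p.1 := by
  have hfib : ∀ x, (x = p.1 ∨ G.Adj p.1 x) → ∀ y, F (x, y) = 0 := by
    rintro x hx y
    by_cases hp : (x, y) = p
    · exact hp ▸ h.1
    · refine h.2 _ ?_
      rcases hx with rfl | hx
      · exact Or.inr ⟨rfl, (SimpleGraph.top_adj _ _).2 fun hy => hp (Prod.ext rfl hy.symm)⟩
      · exact Or.inl hx
  have hg0 : ∀ x, (x = p.1 ∨ G.Adj p.1 x) → g x = 0 := fun x hx => by
    by_contra hgx
    obtain ⟨y, hy⟩ := hg x hgx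
    exact hy (hfib x hx y)
  exact ⟨hg0 _ (Or.inl rfl), fun x hx => hg0 x (Or.inr hx)⟩

lemma Undefended.lexProd {G : SimpleGraph α} (H : SimpleGraph β) {F : α × β → ℕ}
    {g : α → ℕ} (hF : ∀ x y, F (x, y) ≠ 0 → g x ≠ 0) {a : α} (h : Undefended G g a)
    (b : β) : Undefended (lexProd G H) F (a, b) := by
  have hF0 : ∀ x y, g x = 0 → F (x, y) = 0 := fun x y hgx => by
    by_contra hxy
    exact hF x y hxy hgx
  refine ⟨hF0 a b h.1, ?_⟩
  rintro ⟨x, y⟩ (hax | ⟨rfl, -⟩)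
  · exact hF0 x y (h.2 x hax)
  · exact hF0 _ y h.1

lemma IsWRDF.not_undefended {G : SimpleGraph α} {f : α → ℕ} (hf : IsWRDF G f) (w : α) :
    ¬ Undefended G f w := fun hw => by
  obtain ⟨u, hu, hfu, -⟩ := hf.2 w hw.1
  have := hw.2 u hu.symm
  omega

lemma IsWRDF.const_two (G : SimpleGraph α) : IsWRDF G fun _ => 2 :=
  ⟨fun _ => le_rfl, fun _ h => absurd h two_ne_zero⟩

lemma weakRomanNumber_le_of_forall_isWRDF [Fintype α] [Fintype β] {G : SimpleGraph α}
    {G' : SimpleGraph β}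
    (h : ∀ f, IsWRDF G f → ∃ f', IsWRDF G' f' ∧ ∑ v, f' v ≤ ∑ v, f v) :
    weakRomanNumber G' ≤ weakRomanNumber G := by
  have hne : {k | ∃ f, IsWRDF G f ∧ ∑ v, f v = k}.Nonempty :=
    ⟨∑ _v : α, 2, fun _ => 2, IsWRDF.const_two G, rfl⟩
  obtain ⟨f, hf, hsum⟩ := Nat.sInf_mem hne
  obtain ⟨f', hf', hle⟩ := h f hf
  have hf'_le : weakRomanNumber G' ≤ ∑ v, f' v := Nat.sInf_le ⟨f', hf', rfl⟩
  exact hf'_le.trans (hle.trans_eq hsum)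

noncomputable def layerLift (z : β) (f : α → ℕ) : α × β → ℕ :=
  fun p => if p.2 = z then f p.1 else 0

lemma sum_layerLift [Fintype α] [Fintype β] (z : β) (f : α → ℕ) :
    ∑ p, layerLift z f p = ∑ x, f x := by
  simp [layerLift, Fintype.sum_prod_type]

lemma IsWRDF.lexProd_layerLift {G : SimpleGraph α} {f : α → ℕ} (hf : IsWRDF G f) (z : β) :
    IsWRDF (lexProd G ⊤) (layerLift z f) := by
  have hlift : ∀ x, layerLift z f (x, z) = f x := fun x => if_pos rfl
  refine ⟨fun p => ?_, ?_⟩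
  · unfold layerLift
    split_ifs
    exacts [hf.1 _, zero_le_two]
  rintro ⟨u, b⟩ hub
  by_cases hu : f u = 0
  · obtain ⟨c, hcu, hc, hno⟩ := hf.2 u hu
    refine ⟨(c, z), Or.inl hcu, (hlift c).symm ▸ hc, ?_⟩
    rintro ⟨a, b'⟩ hw
    refine hno a (hw.of_lexProd_top fun x hx => ?_)
    rcases eq_or_ne x c with rfl | hxc
    · exact ⟨z, by simpa [hlift] using hx⟩
    rcases eq_or_ne x u with rfl | hxu
    · exact ⟨b, by simp [hxc]⟩
    · exact ⟨z, by simpa [hxc, hxu, hlift] using hx⟩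
  · have hbz : b ≠ z := fun h => hu (by simpa [layerLift, h] using hub)
    refine ⟨(u, z), Or.inr ⟨rfl, (SimpleGraph.top_adj _ _).2 hbz.symm⟩,
      by rw [hlift]; omega, ?_⟩
    rintro ⟨a, b'⟩ hw
    refine hf.not_undefended a (hw.of_lexProd_top fun x hx => ?_)
    rcases eq_or_ne x u with rfl | hxu
    · exact ⟨b, by simp [hbz]⟩
    · exact ⟨z, by simpa [hxu, hlift] using hx⟩

variable [Fintype β]

def capFibreSum (F : α × β → ℕ) (x : α) : ℕ := min (∑ y, F (x, y)) 2

lemma sum_capFibreSum_le [Fintype α] (F : α × β → ℕ) :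
    ∑ x, capFibreSum F x ≤ ∑ p, F p := by
  rw [Fintype.sum_prod_type]
  exact sum_le_sum fun x _ => min_le_left _ _

lemma IsWRDF.capFibreSum_of_lexProd [Nonempty β] {G : SimpleGraph α} {F : α × β → ℕ}
    (hF : IsWRDF (lexProd G ⊤) F) : IsWRDF G (capFibreSum F) := by
  obtain ⟨z⟩ := ‹Nonempty β›
  have hle : ∀ x y, F (x, y) ≤ ∑ y, F (x, y) := fun x y =>
    single_le_sum (f := fun y => F (x, y)) (fun _ _ => Nat.zero_le _) (mem_univ y)
  refine ⟨fun x => min_le_right _ _, fun u hu => ?_⟩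
  have hfib : ∀ y, F (u, y) = 0 := by
    simpa [capFibreSum] using hu
  obtain ⟨⟨c, d⟩, hadj, hcd, hno⟩ := hF.2 (u, z) (hfib z)
  have hcu : c ≠ u := by
    rintro rfl
    rw [hfib d] at hcd
    omega
  refine ⟨c, hadj.resolve_right fun h => hcu h.1, ?_,
    fun w hw => hno (w, z) (hw.lexProd ⊤ (fun x y hxy => ?_) z)⟩
  · have := hle c d
    simp only [capFibreSum]
    omega
  rcases eq_or_ne x c with rfl | hxc
  · suffices 2 ≤ ∑ y, F (x, y) by simp [capFibreSum, this]
    rcases eq_or_ne y d with rfl | hyd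
    · have := hle x y
      simp only [Function.update_self, ne_eq] at hxy
      omega
    · have hxy' : F (x, y) ≠ 0 := by simpa [hyd, hcu] using hxy
      have hpair := sum_le_sum_of_subset (f := fun y => F (x, y)) (subset_univ {y, d})
      rw [sum_pair hyd] at hpair
      omega
  rcases eq_or_ne x u with rfl | hxu
  · simp [hxc]
  · have hxy' : F (x, y) ≠ 0 := by simpa [hxc, hxu] using hxy
    have := hle x y
    simp only [ne_eq, hxc, hxu, not_false_eq_true, Function.update_of_ne, capFibreSum]
    omega

end

/-- For any graph `G` and any `n ≥ 1`, `γ_r(G∘K_n) = γ_r(G)`. -/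
theorem weakRoman_lexProd_complete {α : Type*} [Fintype α] (G : SimpleGraph α)
    (n : ℕ) (hn : 1 ≤ n) :
    weakRomanNumber (lexProd G (⊤ : SimpleGraph (Fin n))) = weakRomanNumber G := by
  let z : Fin n := ⟨0, hn⟩
  have : Nonempty (Fin n) := ⟨z⟩
  apply le_antisymm
  · exact weakRomanNumber_le_of_forall_isWRDF fun f hf =>
      ⟨layerLift z f, hf.lexProd_layerLift z, (sum_layerLift z f).le⟩
  · exact weakRomanNumber_le_of_forall_isWRDF fun F hF =>
      ⟨capFibreSum F, hF.capFibreSum_of_lexProd, sum_capFibreSum_le F⟩
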